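/- arXiv:math/0506463 — 2 statements merged into one kernel-verified Lean document; each statement's English description precedes it below -/
import Mathlib

section
/- If the sequent Γ, A∨B is minimal and neither Γ, A nor Γ, B is valid, then the sequent Γ, A, B is minimal. -/
/-- Propositional formulas in negation normal form. -/
inductive Fm : Type
  | pos : ℕ → Fm
  | neg : ℕ → Fm
  | conj : Fm → Fm → Fm
  | disj : Fm → Fm → Fm
  deriving DecidableEq

/-- Boolean evaluation of a formula under a valuation. -/
def Fm.eval (v : ℕ → Bool) : Fm → Bool
  | .pos p => v p
  | .neg p => !(v p)
  | .conj a b => a.eval v && b.eval v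
  | .disj a b => a.eval v || b.eval v

/-- A sequent (nonempty multiset of formulas) is valid if under every
valuation some member is true (i.e. the disjunction is a tautology). -/
def Valid (Γ : Multiset Fm) : Prop :=
  Γ ≠ 0 ∧ ∀ v : ℕ → Bool, ∃ A ∈ Γ, Fm.eval v A = true

/-- A sequent is minimal if it is valid and no proper sub-multiset is valid. -/
def MinimalSeq (Γ : Multiset Fm) : Prop :=
  Valid Γ ∧ ∀ Δ : Multiset Fm, Δ < Γ → ¬ Valid Δ

/-!
Replacing `A ∨ B` by the two formulas `A, B` does not change validity. A proper valid subsequent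
`Δ` of `Γ, A, B` either contains both `A` and `B`, and then contracting them back to `A ∨ B`
gives a proper valid subsequent of `Γ, A ∨ B`; or it misses one of them, and then it is a
subsequent of `Γ, A` or of `Γ, B`, which would make that sequent valid by weakening.
-/

namespace Multiset

variable {α : Type*} [DecidableEq α]

theorem le_add_singleton_or_of_le_add_pair {s t : Multiset α} {a b : α}
    (h : s ≤ t + {a, b}) (hab : ¬ {a, b} ≤ s) : s ≤ t + {a} ∨ s ≤ t + {b} := by
  have add_singleton (c : α) : t + {c} = c ::ₘ t := by rw [add_comm, singleton_add]
  rw [insert_eq_cons, add_cons, add_singleton] at h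
  rw [add_singleton, add_singleton]
  by_cases ha : a ∈ s
  · have hb : b ∉ s.erase a := fun hb ↦ hab <| by
      rw [insert_eq_cons, ← cons_erase ha]
      exact cons_le_cons a (singleton_le.2 hb)
    rw [← cons_erase ha, cons_le_cons_iff, le_cons_of_notMem hb] at h
    exact Or.inl (erase_le_iff_le_cons.1 h)
  · exact Or.inr ((le_cons_of_notMem ha).1 h)

end Multiset

theorem Valid.mono {Δ E : Multiset Fm} (hΔ : Valid Δ) (hle : Δ ≤ E) : Valid E := by
  refine ⟨ne_bot_of_le_ne_bot hΔ.1 hle, fun v ↦ ?_⟩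
  obtain ⟨C, hC, hCv⟩ := hΔ.2 v
  exact ⟨C, Multiset.mem_of_le hle hC, hCv⟩

theorem valid_add_disj_iff {Γ : Multiset Fm} {A B : Fm} :
    Valid (Γ + {Fm.disj A B}) ↔ Valid (Γ + {A, B}) := by
  simp [Valid, Fm.eval, or_left_comm]

theorem stmt_5 (Γ : Multiset Fm) (A B : Fm)
    (hmin : MinimalSeq (Γ + {Fm.disj A B}))
    (hA : ¬ Valid (Γ + {A})) (hB : ¬ Valid (Γ + {B})) :
    MinimalSeq (Γ + {A, B}) := by
  obtain ⟨hvalid, hproper⟩ := hmin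
  refine ⟨valid_add_disj_iff.1 hvalid, fun Δ hlt hΔ ↦ ?_⟩
  by_cases hAB : {A, B} ≤ Δ
  · obtain ⟨Δ', rfl⟩ := exists_add_of_le hAB
    rw [add_comm] at hlt hΔ
    have hΔ' : Δ' < Γ := lt_of_add_lt_add_right hlt
    exact hproper _ (add_lt_add_left hΔ' _) (valid_add_disj_iff.2 hΔ)
  · rcases Multiset.le_add_singleton_or_of_le_add_pair hlt.le hAB with h | h
    exacts [hA (hΔ.mono h), hB (hΔ.mono h)]
end

section
/- Completeness of Mp for formulas: every valid formula (tautology) is derivable as a singleton sequent in the system Mp. -/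
/-- Derivability in minimal sequent calculus Mp. -/
inductive Mp : Multiset Fm → Prop
  | ax (P : ℕ) : Mp {Fm.pos P, Fm.neg P}
  | blend {Γ Δ S : Multiset Fm} {A B : Fm} :
      Mp (Γ + Δ + {A}) → Mp (Γ + S + {B}) → Mp (Γ + Δ + S + {Fm.conj A B})
  | par {Γ : Multiset Fm} {A B : Fm} :
      Mp (Γ + {A, B}) → Mp (Γ + {Fm.disj A B})
  | plus1 {Γ : Multiset Fm} {A B : Fm} :
      Mp (Γ + {A}) → Mp (Γ + {Fm.disj A B})
  | plus2 {Γ : Multiset Fm} {A B : Fm} :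
      Mp (Γ + {B}) → Mp (Γ + {Fm.disj A B})


namespace Multiset

variable {α : Type*}

lemma exists_eq_add_singleton_of_mem {s : Multiset α} {a : α} (h : a ∈ s) :
    ∃ t, s = t + {a} := by
  obtain ⟨t, rfl⟩ := exists_cons_of_mem h
  exact ⟨t, by rw [add_comm, singleton_add]⟩

lemma le_add_singleton_iff {s t : Multiset α} {a : α} :
    s ≤ t + {a} ↔ s ≤ t ∨ ∃ s' ≤ t, s = s' + {a} := by
  rw [add_comm, singleton_add]
  constructor
  · intro h
    by_cases ha : a ∈ s
    · obtain ⟨s', rfl⟩ := exists_eq_add_singleton_of_mem ha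
      rw [add_comm, singleton_add, cons_le_cons_iff] at h
      exact .inr ⟨s', h, rfl⟩
    · exact .inl ((le_cons_of_notMem ha).1 h)
  · rintro (h | ⟨s', h, rfl⟩)
    · exact h.trans (le_cons_self t a)
    · rwa [add_comm, singleton_add, cons_le_cons_iff]

lemma exists_mem_add_singleton_iff {s : Multiset α} {a : α} {p : α → Prop} :
    (∃ x ∈ s + {a}, p x) ↔ (∃ x ∈ s, p x) ∨ p a := by
  simp [or_and_right, exists_or]

end Multiset

namespace Fm

def size : Fm → ℕ
  | pos _ | neg _ => 0
  | conj a b | disj a b => a.size + b.size + 1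

end Fm

def sequentSize (Γ : Multiset Fm) : ℕ := (Γ.map Fm.size).sum

lemma Valid.of_conj_left {Γ : Multiset Fm} {A B : Fm} (h : Valid (Γ + {Fm.conj A B})) :
    Valid (Γ + {A}) := by
  refine ⟨by simp, fun v => ?_⟩
  have := h.2 v
  simp only [Multiset.exists_mem_add_singleton_iff, Fm.eval, Bool.and_eq_true] at this ⊢
  exact this.imp_right And.left

lemma Valid.of_conj_right {Γ : Multiset Fm} {A B : Fm} (h : Valid (Γ + {Fm.conj A B})) :
    Valid (Γ + {B}) := by
  refine ⟨by simp, fun v => ?_⟩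
  have := h.2 v
  simp only [Multiset.exists_mem_add_singleton_iff, Fm.eval, Bool.and_eq_true] at this ⊢
  exact this.imp_right And.right

lemma Valid.of_disj {Γ : Multiset Fm} {A B : Fm} (h : Valid (Γ + {Fm.disj A B})) :
    Valid (Γ + {A, B}) := by
  refine ⟨by simp, fun v => ?_⟩
  have := h.2 v
  simp only [Multiset.exists_mem_add_singleton_iff, Fm.eval, Bool.or_eq_true] at this
  simpa [or_and_right, exists_or] using or_left_comm.1 this

lemma Valid.exists_pos_neg_mem {Γ : Multiset Fm} (h : Valid Γ)
    (hconj : ∀ A B, Fm.conj A B ∉ Γ) (hdisj : ∀ A B, Fm.disj A B ∉ Γ) :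
    ∃ P, Fm.pos P ∈ Γ ∧ Fm.neg P ∈ Γ := by
  by_contra! hno
  -- make true exactly the atoms occurring negatively in Γ: then no literal of Γ is true
  obtain ⟨C, hC, hv⟩ := h.2 fun p => decide (Fm.neg p ∈ Γ)
  cases C with
  | pos p => exact hno p hC (by simpa [Fm.eval] using hv)
  | neg p => simp [Fm.eval, hC] at hv
  | conj A B => exact hconj A B hC
  | disj A B => exact hdisj A B hC

lemma Mp.ne_zero {Γ : Multiset Fm} (h : Mp Γ) : Γ ≠ 0 := by
  cases h <;> simp

/-- Blending with shared context `Δ₁ ∩ Δ₂` merges the two side contexts into their union. -/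
lemma Mp.conj_union {Δ₁ Δ₂ : Multiset Fm} {A B : Fm} (h₁ : Mp (Δ₁ + {A})) (h₂ : Mp (Δ₂ + {B})) :
    Mp (Δ₁ ∪ Δ₂ + {Fm.conj A B}) := by
  have e₁ : Δ₁ ∩ Δ₂ + (Δ₁ - Δ₁ ∩ Δ₂) = Δ₁ := add_tsub_cancel_of_le Multiset.inter_le_left
  have e₂ : Δ₁ ∩ Δ₂ + (Δ₂ - Δ₁ ∩ Δ₂) = Δ₂ := add_tsub_cancel_of_le Multiset.inter_le_right
  have e : Δ₁ ∩ Δ₂ + (Δ₁ - Δ₁ ∩ Δ₂) + (Δ₂ - Δ₁ ∩ Δ₂) = Δ₁ ∪ Δ₂ := by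
    ext C
    simp only [Multiset.count_add, Multiset.count_sub, Multiset.count_inter, Multiset.count_union]
    omega
  rw [← e]
  exact Mp.blend (by rwa [e₁]) (by rwa [e₂])

def HasMpSubmultiset (Γ : Multiset Fm) : Prop := ∃ Δ ≤ Γ, Mp Δ

lemma HasMpSubmultiset.mono {Γ Γ' : Multiset Fm} (h : HasMpSubmultiset Γ) (hle : Γ ≤ Γ') :
    HasMpSubmultiset Γ' :=
  let ⟨Δ, hΔ, hMp⟩ := h
  ⟨Δ, hΔ.trans hle, hMp⟩

lemma hasMpSubmultiset_of_pos_neg_mem {Γ : Multiset Fm} {P : ℕ} (hp : Fm.pos P ∈ Γ)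
    (hn : Fm.neg P ∈ Γ) : HasMpSubmultiset Γ :=
  have hsub : ({Fm.pos P, Fm.neg P} : Multiset Fm) ⊆ Γ := by
    simp [Multiset.insert_eq_cons, Multiset.cons_subset, hp, hn]
  ⟨_, (Multiset.le_iff_subset (by simp)).2 hsub, Mp.ax P⟩

lemma HasMpSubmultiset.conj {Γ : Multiset Fm} {A B : Fm} (hA : HasMpSubmultiset (Γ + {A}))
    (hB : HasMpSubmultiset (Γ + {B})) : HasMpSubmultiset (Γ + {Fm.conj A B}) := by
  obtain ⟨Δ₁, hle₁, hMp₁⟩ := hA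
  obtain ⟨Δ₂, hle₂, hMp₂⟩ := hB
  rcases Multiset.le_add_singleton_iff.1 hle₁ with hΓ₁ | ⟨Δ₁, hΓ₁, rfl⟩
  · exact HasMpSubmultiset.mono ⟨Δ₁, hΓ₁, hMp₁⟩ (Multiset.le_add_right _ _)
  rcases Multiset.le_add_singleton_iff.1 hle₂ with hΓ₂ | ⟨Δ₂, hΓ₂, rfl⟩
  · exact HasMpSubmultiset.mono ⟨Δ₂, hΓ₂, hMp₂⟩ (Multiset.le_add_right _ _)
  exact ⟨_, add_le_add_left (Multiset.union_le hΓ₁ hΓ₂) _, hMp₁.conj_union hMp₂⟩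

lemma HasMpSubmultiset.disj {Γ : Multiset Fm} {A B : Fm} (h : HasMpSubmultiset (Γ + {A, B})) :
    HasMpSubmultiset (Γ + {Fm.disj A B}) := by
  obtain ⟨Δ, hle, hMp⟩ := h
  have hpair : ({A, B} : Multiset Fm) = {B} + {A} := by
    rw [Multiset.insert_eq_cons, ← Multiset.singleton_add, add_comm]
  rw [hpair, ← add_assoc] at hle
  have hsub : Γ ≤ Γ + {Fm.disj A B} := Multiset.le_add_right _ _
  rcases Multiset.le_add_singleton_iff.1 hle with hleB | ⟨Δ, hleB, rfl⟩ <;>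
    rcases Multiset.le_add_singleton_iff.1 hleB with hleΓ | ⟨Δ, hleΓ, rfl⟩
  · exact ⟨_, hleΓ.trans hsub, hMp⟩
  · exact ⟨_, add_le_add_left hleΓ _, Mp.plus2 hMp⟩
  · exact ⟨_, add_le_add_left hleΓ _, Mp.plus1 hMp⟩
  · refine ⟨_, add_le_add_left hleΓ _, Mp.par ?_⟩
    rwa [hpair, ← add_assoc]

theorem Valid.hasMpSubmultiset {Γ : Multiset Fm} (hΓ : Valid Γ) : HasMpSubmultiset Γ := by
  by_cases hconj : ∃ A B, Fm.conj A B ∈ Γ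
  · obtain ⟨A, B, hmem⟩ := hconj
    obtain ⟨Γ, rfl⟩ := Multiset.exists_eq_add_singleton_of_mem hmem
    exact hΓ.of_conj_left.hasMpSubmultiset.conj hΓ.of_conj_right.hasMpSubmultiset
  by_cases hdisj : ∃ A B, Fm.disj A B ∈ Γ
  · obtain ⟨A, B, hmem⟩ := hdisj
    obtain ⟨Γ, rfl⟩ := Multiset.exists_eq_add_singleton_of_mem hmem
    exact hΓ.of_disj.hasMpSubmultiset.disj
  push Not at hconj hdisj
  obtain ⟨P, hp, hn⟩ := hΓ.exists_pos_neg_mem hconj hdisj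
  exact hasMpSubmultiset_of_pos_neg_mem hp hn
termination_by sequentSize Γ
decreasing_by
  all_goals
    subst_vars
    simp only [sequentSize, Multiset.insert_eq_cons, Multiset.map_add, Multiset.map_cons,
      Multiset.map_singleton, Multiset.sum_add, Multiset.sum_cons, Multiset.sum_singleton, Fm.size]
    omega

theorem stmt_7 (A : Fm) (h : ∀ v : ℕ → Bool, A.eval v = true) :
    Mp ({A} : Multiset Fm) := by
  obtain ⟨Δ, hle, hMp⟩ := Valid.hasMpSubmultiset (Γ := {A}) ⟨by simp, fun v => ⟨A, by simp, h v⟩⟩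
  rcases Multiset.le_singleton.1 hle with rfl | rfl
  · exact (hMp.ne_zero rfl).elim
  · exact hMp
end
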